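/- arXiv:1912.09407 — 3 statements merged into one kernel-verified Lean document; each statement's English description precedes it below -/
import Mathlib

section
/- For the Lewis metric functions f = a r^{1−n} − c² r^{n+1}/(n² a), C = c r^{n+1}/(n a f) + b, k = −Cf, l = r²/f − C² f, with real constants a ≠ 0, b, c, n and with Ω := c/(n − bc) (assuming n − bc ≠ 0), the coordinate transformation φ̄ = φ − Ω t transforms the metric −f dt² + 2k dt dφ + l dφ² into −f̄ (dt + C̄ dφ̄)² + (r²/f̄) dφ̄², where f̄ = r^{1−n}/α with α = C̄²/(a b²) and C̄ = b(n − bc)/n. -/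
set_option maxHeartbeats 2000000 in
/-- the rigid rotation φ̄ = φ − Ωt with Ω = c/(n − bc) brings the
t–φ block of the Weyl-class Lewis metric to the canonical form
−f̄(dt + C̄ dφ̄)² + (r²/f̄) dφ̄², with f̄ = r^{1−n}/α, α = C̄²/(ab²), C̄ = b(n−bc)/n. -/
theorem lewis_weyl_canonical_form_case_one
    (a b c n r : ℝ) (ha : a ≠ 0) (hb : b ≠ 0) (hn : n ≠ 0)
    (hnbc : n - b * c ≠ 0) (hr : 0 < r)
    (f : ℝ) (hf : f = a * r ^ (1 - n) - c ^ 2 * r ^ (n + 1) / (n ^ 2 * a))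
    (hf0 : f ≠ 0)
    (C : ℝ) (hC : C = c * r ^ (n + 1) / (n * a * f) + b)
    (k l Ω Cbar α fbar : ℝ)
    (hk : k = -C * f) (hl : l = r ^ 2 / f - C ^ 2 * f)
    (hΩ : Ω = c / (n - b * c))
    (hCbar : Cbar = b * (n - b * c) / n)
    (hα : α = Cbar ^ 2 / (a * b ^ 2))
    (hfbar : fbar = r ^ (1 - n) / α) :
    ∀ dt dφbar : ℝ,
      -f * dt ^ 2 + 2 * k * dt * (dφbar + Ω * dt) + l * (dφbar + Ω * dt) ^ 2
        = -fbar * (dt + Cbar * dφbar) ^ 2 + (r ^ 2 / fbar) * dφbar ^ 2 := by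
  intro dt dφbar
  have hu0 : (0:ℝ) < r ^ (1 - n) := Real.rpow_pos_of_pos hr _
  have huv : r ^ (1 - n) * r ^ (n + 1) = r ^ 2 := by
    rw [← Real.rpow_add hr]
    have h2 : (1 - n) + (n + 1) = (2:ℝ) := by ring
    rw [h2, ← Real.rpow_natCast r 2]
    norm_num
  set u := r ^ (1 - n) with hu'
  set v := r ^ (n + 1) with hv'
  have hu : u ≠ 0 := ne_of_gt hu0
  have hf' : f = (a ^ 2 * n ^ 2 * u - c ^ 2 * v) / (n ^ 2 * a) := by
    rw [hf]; field_simp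
  have h2 : a ^ 2 * n ^ 2 * u - c ^ 2 * v ≠ 0 := by
    intro h
    apply hf0
    rw [hf', h, zero_div]
  clear hf
  subst hC hk hl hΩ hCbar hα hfbar hf'
  rw [← huv]
  field_simp [h2, hnbc, hu, ha, hb, hn, show n - c * b ≠ 0 by rwa [mul_comm] at hnbc]
  ring
end

section
/- For the Lewis metric t–φ block −f dt² + 2k dt dφ + l dφ² with f, k, l, C as in the Weyl-class Lewis solution and real parameters a ≠ 0, b ≠ 0, c, n ≠ 0, the substitution φ̄ = φ + t/b (i.e., Ω = −1/b) transforms it into −f̄(dt + C̄ dφ̄)² + (r²/f̄) dφ̄² with f̄ = r^{1+n}/α, α = −a b², and C̄ = −b(n − bc)/n. -/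
/-!
Completing the square in `x`: a binary quadratic form `A x² + 2 B x y + D y²` equals
`−F (x + G y)² + (R / F) y²` as soon as `A = −F ≠ 0`, `B = −F G` and `A D − B² = −R`.
The Lewis block is already of this shape with `(F, G, R) = (f, C, r²)`, so its determinant is
`−r²`; the shear `dφ = dφ̄ + Ω dt` has determinant one and preserves it. Only the new `dt²` and
`dt dφ̄` coefficients have to be computed, and both are governed by `P = f (C − b) = c r^{n+1} / (n a)`
through the identity `r² − P² = r^{n+1} f / a`.
-/

open Real

namespace BinaryQuadraticForm

theorem eq_neg_mul_sq_add_div_mul_sq {A B D F G R : ℝ} (hF : F ≠ 0) (hA : A = -F)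
    (hB : B = -(F * G)) (hdet : A * D - B ^ 2 = -R) (x y : ℝ) :
    A * x ^ 2 + 2 * B * x * y + D * y ^ 2 = -F * (x + G * y) ^ 2 + R / F * y ^ 2 := by
  have hD : D = R / F - F * G ^ 2 := by
    subst hA hB
    field_simp
    linear_combination -hdet
  subst hA hB hD
  field_simp
  ring

theorem shear (A B D Ω x y : ℝ) :
    A * x ^ 2 + 2 * B * x * (y + Ω * x) + D * (y + Ω * x) ^ 2
      = (A + 2 * B * Ω + D * Ω ^ 2) * x ^ 2 + 2 * (B + D * Ω) * x * y + D * y ^ 2 := by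
  ring

theorem det_shear (A B D Ω : ℝ) :
    (A + 2 * B * Ω + D * Ω ^ 2) * D - (B + D * Ω) ^ 2 = A * D - B ^ 2 := by
  ring

end BinaryQuadraticForm

namespace LewisBlock

theorem det {f C r : ℝ} (hf : f ≠ 0) :
    -f * (r ^ 2 / f - C ^ 2 * f) - (-C * f) ^ 2 = -r ^ 2 := by
  field_simp
  ring

theorem shear_coeff_tt {f C b r : ℝ} (hf : f ≠ 0) (hb : b ≠ 0) :
    -f + 2 * (-C * f) * -(1 / b) + (r ^ 2 / f - C ^ 2 * f) * (-(1 / b)) ^ 2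
      = (r ^ 2 - (f * (C - b)) ^ 2) / (f * b ^ 2) := by
  field_simp
  ring

theorem shear_coeff_tφ {f C b r : ℝ} (hf : f ≠ 0) (hb : b ≠ 0) :
    -C * f + (r ^ 2 / f - C ^ 2 * f) * -(1 / b) = (C * f * (f * (C - b)) - r ^ 2) / (f * b) := by
  field_simp
  ring

end LewisBlock

theorem rpow_one_sub_mul_rpow_add_one {r : ℝ} (hr : 0 < r) (n : ℝ) :
    r ^ (1 - n) * r ^ (n + 1) = r ^ 2 := by
  rw [← rpow_add hr, show 1 - n + (n + 1) = (2 : ℝ) by ring, rpow_two]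

namespace LewisWeyl

variable {a b c n r u v f C : ℝ}

theorem f_mul_C_sub_b_eq (hf0 : f ≠ 0) (hC : C = c * v / (n * a * f) + b) :
    f * (C - b) = c * v / (n * a) := by
  subst hC
  field_simp
  ring

theorem r_sq_sub_sq_eq (ha : a ≠ 0) (hn : n ≠ 0) (huv : u * v = r ^ 2)
    (hf : f = a * u - c ^ 2 * v / (n ^ 2 * a)) :
    r ^ 2 - (c * v / (n * a)) ^ 2 = v * f / a := by
  subst hf
  rw [← huv]
  field_simp

end LewisWeyl

/-- the rigid rotation φ̄ = φ + t/b (Ω = −1/b) brings the t–φ block of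
the Weyl-class Lewis metric to the canonical form −f̄(dt + C̄ dφ̄)² + (r²/f̄) dφ̄²,
with f̄ = r^{1+n}/α, α = −ab², C̄ = −b(n−bc)/n. -/
theorem lewis_weyl_canonical_form_case_two
    (a b c n r : ℝ) (ha : a ≠ 0) (hb : b ≠ 0) (hn : n ≠ 0) (hr : 0 < r)
    (f : ℝ) (hf : f = a * r ^ (1 - n) - c ^ 2 * r ^ (n + 1) / (n ^ 2 * a))
    (hf0 : f ≠ 0)
    (C : ℝ) (hC : C = c * r ^ (n + 1) / (n * a * f) + b)
    (k l Ω Cbar α fbar : ℝ)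
    (hk : k = -C * f) (hl : l = r ^ 2 / f - C ^ 2 * f)
    (hΩ : Ω = -(1 / b))
    (hCbar : Cbar = -(b * (n - b * c) / n))
    (hα : α = -(a * b ^ 2))
    (hfbar : fbar = r ^ (1 + n) / α) :
    ∀ dt dφbar : ℝ,
      -f * dt ^ 2 + 2 * k * dt * (dφbar + Ω * dt) + l * (dφbar + Ω * dt) ^ 2
        = -fbar * (dt + Cbar * dφbar) ^ 2 + (r ^ 2 / fbar) * dφbar ^ 2 := by
  intro dt dφbar
  have hv : r ^ (n + 1) ≠ 0 := (rpow_pos_of_pos hr _).ne'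
  have hfbar_eq : fbar = -(r ^ (n + 1) / (a * b ^ 2)) := by rw [hfbar, hα, add_comm, div_neg]
  have hP := LewisWeyl.f_mul_C_sub_b_eq hf0 hC
  have hr2 : r ^ 2 = (c * r ^ (n + 1) / (n * a)) ^ 2 + r ^ (n + 1) * f / a := by
    linear_combination LewisWeyl.r_sq_sub_sq_eq ha hn (rpow_one_sub_mul_rpow_add_one hr n) hf
  subst hk hl hΩ
  rw [BinaryQuadraticForm.shear]
  refine BinaryQuadraticForm.eq_neg_mul_sq_add_div_mul_sq
    (by rw [hfbar_eq]; simp [ha, hb, hv]) ?_ ?_ ?_ dt dφbar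
  · rw [LewisBlock.shear_coeff_tt hf0 hb, hP, hr2, hfbar_eq]
    field_simp
    ring
  · rw [LewisBlock.shear_coeff_tφ hf0 hb, hP, hr2, hfbar_eq, hCbar, hC]
    field_simp
    ring
  · rw [BinaryQuadraticForm.det_shear, LewisBlock.det hf0]
end

section
/- For the van Stockum interior metric functions F = 1, M = w r², L = r² − w² r⁴, H = e^{−w²r²} and the exterior ones F, M, L, H given by the van Stockum formulas with N = √(1/4 − w²R²), the four functions (F, M, L, H) of the interior and exterior solutions agree at r = R (for 0 < wR < 1/2). -/
/-! At `r = R` every power of `r / R` equals `1`, so the exterior functions reduce to their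
coefficients. `F` and `M` then match because `(2N - 1) + (2N + 1) = 4N`, `H` matches on the nose,
and `L` matches because `(2N + 1)³ + (2N - 1)³ = 16N (N² + 3/4)` while `N² + 3/4 = 1 - w²R²`. -/

lemma quarter_sub_sq_pos {a : ℝ} (h₀ : 0 < a) (h₁ : a < 1 / 2) : 0 < 1 / 4 - a ^ 2 := by
  nlinarith

lemma two_mul_add_one_cube_add_cube_div {N : ℝ} (hN : N ≠ 0) :
    ((2 * N + 1) ^ 3 + (2 * N - 1) ^ 3) / (16 * N) = N ^ 2 + 3 / 4 := by
  field_simp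
  ring

lemma div_self_rpow {R : ℝ} (hR : R ≠ 0) (x : ℝ) : (R / R) ^ x = 1 := by
  rw [div_self hR, Real.one_rpow]

/-- the van Stockum interior metric functions
(F, M, L, H) = (1, wr², r² − w²r⁴, e^{−w²r²}) agree at r = R with the exterior
ones given by the van Stockum formulas with N = √(1/4 − w²R²), for 0 < wR < 1/2. -/
theorem van_stockum_matching_at_boundary
    (w R : ℝ) (hw : 0 < w) (hR : 0 < R) (hwR : w * R < 1 / 2)
    (N : ℝ) (hN : N = Real.sqrt (1 / 4 - w ^ 2 * R ^ 2))
    (Fext Mext Lext Hext Fint Mint Lint Hint : ℝ → ℝ)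
    (hFext : ∀ r, Fext r =
      ((2 * N - 1) * (r / R) ^ (2 * N + 1) + (2 * N + 1) * (r / R) ^ (1 - 2 * N)) / (4 * N))
    (hMext : ∀ r, Mext r = w * R ^ 2 *
      ((2 * N + 1) * (r / R) ^ (2 * N + 1) + (2 * N - 1) * (r / R) ^ (1 - 2 * N)) / (4 * N))
    (hLext : ∀ r, Lext r = R ^ 2 *
      ((2 * N + 1) ^ 3 * (r / R) ^ (2 * N + 1) + (2 * N - 1) ^ 3 * (r / R) ^ (1 - 2 * N)) /
        (16 * N))
    (hHext : ∀ r, Hext r = Real.exp (-(w ^ 2 * R ^ 2)) * (r / R) ^ (-(2 * w ^ 2 * R ^ 2)))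
    (hFint : ∀ r, Fint r = 1)
    (hMint : ∀ r, Mint r = w * r ^ 2)
    (hLint : ∀ r, Lint r = r ^ 2 - w ^ 2 * r ^ 4)
    (hHint : ∀ r, Hint r = Real.exp (-(w ^ 2 * r ^ 2))) :
    Fext R = Fint R ∧ Mext R = Mint R ∧ Lext R = Lint R ∧ Hext R = Hint R := by
  have hrad : 0 < 1 / 4 - w ^ 2 * R ^ 2 := by
    simpa only [mul_pow] using quarter_sub_sq_pos (mul_pos hw hR) hwR
  have hN2 : N ^ 2 = 1 / 4 - w ^ 2 * R ^ 2 := hN ▸ Real.sq_sqrt hrad.le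
  have hN0 : N ≠ 0 := hN ▸ (Real.sqrt_pos.2 hrad).ne'
  simp only [hFext, hMext, hLext, hHext, hFint, hMint, hLint, hHint,
    div_self_rpow hR.ne', mul_one]
  refine ⟨by field_simp; ring, by field_simp; ring, ?_, trivial⟩
  rw [mul_div_assoc, two_mul_add_one_cube_add_cube_div hN0, hN2]
  ring
end
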